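/- Let n ≥ 2 be an integer, T > 0, m ≥ 0 a real number, and fix any spatial coordinate index i ∈ {1,…,n-1}. Then ∫_{I[p,q]} (x^i)² · τ(x,q)^m dx = f₂(m) · T² · ∫_{I[p,q]} τ(x,q)^m dx, where f₂(m) = n(n+m) / ( 4(n+m+2)(n+m/2+1)(n+m/2) ). In particular the left-hand side is independent of the choice of spatial index i. -/

import Mathlib

open MeasureTheory

/-- A point of `n`-dimensional Minkowski space: a time coordinate in `ℝ`
and a spatial part in `ℝ^{n-1}` (with the Euclidean norm). -/
abbrev MinkPt (n : ℕ) := ℝ × EuclideanSpace ℝ (Fin (n - 1))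

/-- The Minkowski causal order: `x ⪯ y` iff `y⁰ - x⁰ ≥ ‖y⃗ - x⃗‖`. -/
def causalLE {n : ℕ} (x y : MinkPt n) : Prop := ‖y.2 - x.2‖ ≤ y.1 - x.1

/-- The bottom tip `p = (-T/2, 0)` of the causal diamond. -/
noncomputable def pDiam (n : ℕ) (T : ℝ) : MinkPt n := (-(T / 2), 0)

/-- The top tip `q = (T/2, 0)` of the causal diamond. -/
noncomputable def qDiam (n : ℕ) (T : ℝ) : MinkPt n := (T / 2, 0)

/-- The Alexandrov interval (causal diamond) `I[p,q] = {x : p ⪯ x ⪯ q}`. -/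
def diamond (n : ℕ) (T : ℝ) : Set (MinkPt n) :=
  {x | causalLE (pDiam n T) x ∧ causalLE x (qDiam n T)}

/-- The surface area `A_{d} = 2π^{(d+1)/2}/Γ((d+1)/2)` of the unit sphere `S^{d} ⊂ ℝ^{d+1}`;
here we take `d = n - 2`, so `A_{n-2} = 2π^{(n-1)/2}/Γ((n-1)/2)`. -/
noncomputable def sphereArea (n : ℕ) : ℝ :=
  2 * Real.pi ^ (((n : ℝ) - 1) / 2) / Real.Gamma (((n : ℝ) - 1) / 2)


/-- The proper time `τ(x,y) = √((y⁰-x⁰)² - ‖y⃗-x⃗‖²)` between causally related points. -/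
noncomputable def tau {n : ℕ} (x y : MinkPt n) : ℝ :=
  Real.sqrt ((y.1 - x.1) ^ 2 - ‖y.2 - x.2‖ ^ 2)

/-!
Put the origin of time at `q` and use polar coordinates in space: with `s = T/2 - x⁰` and
`r = ‖x⃗‖` the diamond becomes the triangle `0 < r ≤ min s (T - s)` and `τ(x, q) = √(s² - r²)`,
so `∫ ‖x⃗‖^k τ^m` is a dimensional constant times the moment `∫∫ r^(n-2+k) (s² - r²)^(m/2)`.
In light-cone coordinates `u = s - r`, `v = s + r` this moment is a Beta value
`B(m/2 + 1, n - 1 + k)` times `∫₀^T v^(n-1+k+m) dv`, so the moments for `k = 2` and `k = 0`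
differ by an explicit rational factor times `T²`. Permuting coordinates shows that each
`(x^i)²` contributes `1/(n-1)` of `‖x⃗‖²`.
-/

open Set Real Metric
open scoped Nat

-- `K! / ∏ j ≤ K, (a + 1 + j)` is the Beta value `B(a + 1, K + 1)`.
lemma integral_rpow_mul_sub_pow {a v : ℝ} (ha : -1 < a) (hv : 0 ≤ v) (K : ℕ) :
    ∫ u in (0 : ℝ)..v, u ^ a * (v - u) ^ K =
      v ^ (a + K + 1) * (K ! / ∏ j ∈ Finset.range (K + 1), (a + 1 + j)) := by
  rcases hv.eq_or_lt with rfl | hv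
  · rw [intervalIntegral.integral_same, zero_rpow (by linarith [K.cast_nonneg (α := ℝ)]),
      zero_mul]
  apply Complex.ofReal_injective
  have key := Complex.betaIntegral_scaled (a + 1 : ℝ) (K + 1) hv
  rw [Complex.betaIntegral_eval_nat_add_one_right (by rw [Complex.ofReal_re]; linarith)] at key
  rw [← intervalIntegral.integral_ofReal]
  convert key using 1
  · refine intervalIntegral.integral_congr fun u hu => ?_
    rw [uIcc_of_le hv.le] at hu
    rw [add_sub_cancel_right, Complex.cpow_natCast, Complex.ofReal_add, Complex.ofReal_one,
      add_sub_cancel_right, ← Complex.ofReal_cpow hu.1]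
    push_cast; rfl
  · rw [Complex.ofReal_mul, Complex.ofReal_cpow hv.le]
    push_cast
    ring_nf

lemma integral_lightcone_slice {m v : ℝ} (hm : 0 ≤ m) (hv : 0 ≤ v) (K : ℕ) :
    ∫ s in v / 2..v, (v - s) ^ K * √((2 * s - v) * v) ^ m =
      v ^ (K + m + 1) * (K ! / ∏ j ∈ Finset.range (K + 1), (m / 2 + 1 + j)) / 2 ^ (K + 1) := by
  have hsub := intervalIntegral.integral_comp_mul_sub
    (fun u => ((v - u) / 2) ^ K * √(u * v) ^ m) (two_ne_zero (α := ℝ)) (a := v / 2) (b := v) v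
  simp only [show ∀ s : ℝ, (v - (2 * s - v)) / 2 = v - s by intro s; ring,
    show 2 * (v / 2) - v = 0 by ring, show 2 * v - v = v by ring] at hsub
  rw [hsub, smul_eq_mul]
  have hpoint : ∀ u ∈ uIcc 0 v, ((v - u) / 2) ^ K * √(u * v) ^ m
      = (2 ^ K)⁻¹ * v ^ (m / 2) * (u ^ (m / 2) * (v - u) ^ K) := by
    intro u hu
    rw [uIcc_of_le hv] at hu
    rw [sqrt_mul hu.1, mul_rpow (sqrt_nonneg _) (sqrt_nonneg _), sqrt_eq_rpow, sqrt_eq_rpow,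
      ← rpow_mul hu.1, ← rpow_mul hv, div_pow]
    ring_nf
  rw [intervalIntegral.integral_congr hpoint, intervalIntegral.integral_const_mul,
    integral_rpow_mul_sub_pow (by linarith) hv]
  rw [show v ^ ((K : ℝ) + m + 1) = v ^ (m / 2) * v ^ (m / 2 + K + 1) by
    rw [← rpow_add' hv (by positivity)]; ring_nf]
  ring

noncomputable def triangleMoment (T m : ℝ) (K : ℕ) : ℝ :=
  ∫ s, ∫ r in Ioc 0 (min s (T - s)), r ^ K * √(s ^ 2 - r ^ 2) ^ m

lemma triangleMoment_eq {T m : ℝ} (hT : 0 ≤ T) (hm : 0 ≤ m) (K : ℕ) :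
    triangleMoment T m K = T ^ (K + m + 2) / (2 ^ (K + 1) * (K + m + 2)) *
      (K ! / ∏ j ∈ Finset.range (K + 1), (m / 2 + 1 + j)) := by
  set β : ℝ := K ! / ∏ j ∈ Finset.range (K + 1), (m / 2 + 1 + j)
  set G : ℝ × ℝ → ℝ := fun p => (p.2 - p.1) ^ K * √((2 * p.1 - p.2) * p.2) ^ m
  set S : Set (ℝ × ℝ) := {p | p.1 < p.2 ∧ p.2 ≤ 2 * p.1 ∧ p.2 ≤ T}
  have hS : MeasurableSet S :=
    (measurableSet_lt measurable_fst measurable_snd).inter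
      ((measurableSet_le measurable_snd (by fun_prop)).inter
        (measurableSet_le measurable_snd measurable_const))
  have hG : Continuous G := by
    have : Continuous fun x : ℝ => x ^ m := continuous_rpow_const hm
    fun_prop
  have hint : Integrable (S.indicator G) (volume.prod volume) := by
    rw [← Measure.volume_eq_prod, integrable_indicator_iff hS]
    refine (hG.continuousOn.integrableOn_compact
      (isCompact_Icc (a := ((0 : ℝ), (0 : ℝ))) (b := (T, T)))).mono_set ?_
    rintro ⟨s, v⟩ ⟨h1, h2, h3⟩
    dsimp only at h1 h2 h3
    exact ⟨⟨by linarith, by linarith⟩, by linarith, h3⟩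
  -- In the variables `(s, v = s + r)` the triangle becomes `S`, whose `v`-slices are `[v/2, v)`.
  have hinner : ∀ s, ∫ r in Ioc 0 (min s (T - s)), r ^ K * √(s ^ 2 - r ^ 2) ^ m =
      ∫ v, S.indicator G (s, v) := by
    intro s
    rw [← integral_indicator measurableSet_Ioc, ← integral_sub_right_eq_self _ s]
    congr 1 with v
    simp only [indicator_apply, mem_Ioc, le_min_iff, S, G, mem_ofPred_eq]
    congr 1
    · apply propext; constructor <;> rintro ⟨h1, h2, h3⟩ <;> refine ⟨?_, ?_, ?_⟩ <;> linarith
    · ring_nf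
  have hslice : ∀ v, ∫ s, S.indicator G (s, v) =
      (Ioc 0 T).indicator (fun v => v ^ (K + m + 1) * β / 2 ^ (K + 1)) v := by
    intro v
    by_cases hv : v ∈ Ioc 0 T
    · have hrestrict : ∀ s,
          S.indicator G (s, v) = (Ico (v / 2) v).indicator (fun s => G (s, v)) s := by
        intro s
        simp only [indicator_apply, mem_Ico, S, mem_ofPred_eq]
        congr 1
        exact propext ⟨fun ⟨h1, h2, _⟩ => ⟨by linarith, h1⟩,
          fun ⟨h1, h2⟩ => ⟨h2, by linarith, hv.2⟩⟩
      simp_rw [hrestrict]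
      rw [indicator_of_mem hv, integral_indicator measurableSet_Ico, integral_Ico_eq_integral_Ioo,
        ← integral_Ioc_eq_integral_Ioo, ← intervalIntegral.integral_of_le (by linarith [hv.1]),
        ← integral_lightcone_slice hm hv.1.le]
    · rw [indicator_of_notMem hv]
      refine integral_eq_zero_of_ae (.of_forall fun s => indicator_of_notMem ?_ _)
      rintro ⟨h1, h2, h3⟩
      dsimp only at h1 h2 h3
      exact hv ⟨by linarith, h3⟩
  calc triangleMoment T m K = ∫ s, ∫ v, S.indicator G (s, v) :=
        integral_congr_ae (.of_forall hinner)
    _ = ∫ v, ∫ s, S.indicator G (s, v) := integral_integral_swap hint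
    _ = ∫ v in (0 : ℝ)..T, v ^ (K + m + 1) * β / 2 ^ (K + 1) := by
      simp_rw [hslice]
      rw [integral_indicator measurableSet_Ioc, intervalIntegral.integral_of_le hT]
    _ = _ := by
      rw [intervalIntegral.integral_div, intervalIntegral.integral_mul_const,
        integral_rpow (Or.inl (by linarith [K.cast_nonneg (α := ℝ)])),
        zero_rpow (by positivity), sub_zero, show (K : ℝ) + m + 1 + 1 = K + m + 2 by ring]
      field_simp

lemma triangleMoment_add_two {T m : ℝ} (hT : 0 ≤ T) (hm : 0 ≤ m) (K : ℕ) :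
    triangleMoment T m (K + 2) = (K + 1) * (K + 2) * (K + m + 2) /
      (4 * (K + m + 4) * (K + m / 2 + 3) * (K + m / 2 + 2)) * T ^ 2 * triangleMoment T m K := by
  have hprod : 0 < ∏ j ∈ Finset.range (K + 1), (m / 2 + 1 + j) :=
    Finset.prod_pos fun j _ => by positivity
  rw [triangleMoment_eq hT hm, triangleMoment_eq hT hm, Finset.prod_range_succ,
    Finset.prod_range_succ, Nat.factorial_succ, Nat.factorial_succ,
    show ((K + 2 : ℕ) : ℝ) + m + 2 = (K + m + 2) + 2 by push_cast; ring,
    rpow_add' hT (by positivity), rpow_two]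
  push_cast
  field_simp
  ring

section Radial

lemma integral_prod_fun_norm {E : Type*} [NormedAddCommGroup E] [NormedSpace ℝ E]
    [FiniteDimensional ℝ E] [MeasurableSpace E] [BorelSpace E] [Nontrivial E]
    (μ : Measure E) [μ.IsAddHaarMeasure] (f : ℝ → ℝ → ℝ)
    (hf : Integrable (fun p : ℝ × E => f p.1 ‖p.2‖) (volume.prod μ)) :
    ∫ p, f p.1 ‖p.2‖ ∂(volume.prod μ) = (Module.finrank ℝ E * μ.real (ball 0 1)) *
      ∫ t, ∫ r in Ioi 0, r ^ (Module.finrank ℝ E - 1) * f t r := by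
  rw [integral_prod _ hf, ← integral_const_mul]
  congr 1 with t
  rw [integral_fun_norm_addHaar μ (f t), nsmul_eq_mul, smul_eq_mul, mul_assoc]
  rfl

variable {d : ℕ}

lemma integral_coord_sq_mul_radial (F : ℝ → ℝ → ℝ) (i j : Fin d) :
    ∫ p : ℝ × EuclideanSpace ℝ (Fin d), p.2 i ^ 2 * F p.1 ‖p.2‖ =
      ∫ p : ℝ × EuclideanSpace ℝ (Fin d), p.2 j ^ 2 * F p.1 ‖p.2‖ := by
  let e := LinearIsometryEquiv.piLpCongrLeft 2 ℝ ℝ (Equiv.swap i j)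
  have he : MeasurePreserving (MeasurableEquiv.prodCongr (.refl ℝ) e.toMeasurableEquiv)
      (volume.prod volume) (volume.prod volume) :=
    (MeasurePreserving.id volume).prod e.measurePreserving
  rw [Measure.volume_eq_prod, ← he.integral_comp']
  congr 1 with p
  show (e p.2) i ^ 2 * F p.1 ‖e p.2‖ = _
  simp [e, LinearIsometryEquiv.piLpCongrLeft_apply, Equiv.piCongrLeft'_apply]

lemma integral_norm_sq_mul_radial (F : ℝ → ℝ → ℝ) (i : Fin d)
    (hF : Integrable fun p : ℝ × EuclideanSpace ℝ (Fin d) => ‖p.2‖ ^ 2 * F p.1 ‖p.2‖) :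
    ∫ p : ℝ × EuclideanSpace ℝ (Fin d), ‖p.2‖ ^ 2 * F p.1 ‖p.2‖ =
      d * ∫ p : ℝ × EuclideanSpace ℝ (Fin d), p.2 i ^ 2 * F p.1 ‖p.2‖ := by
  have hcoord : ∀ j,
      Integrable fun p : ℝ × EuclideanSpace ℝ (Fin d) => p.2 j ^ 2 * F p.1 ‖p.2‖ := by
    intro j
    have hbdd := hF.bdd_mul (c := 1) (f := fun p => p.2 j ^ 2 / ‖p.2‖ ^ 2)
      (Measurable.aestronglyMeasurable (by fun_prop))
      (.of_forall fun p => by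
        rw [norm_div, norm_pow, norm_pow, Real.norm_eq_abs, norm_norm, sq_abs]
        refine div_le_one_of_le₀ ?_ (by positivity)
        simpa [sq_abs] using pow_le_pow_left₀ (norm_nonneg _) (PiLp.norm_apply_le p.2 j) 2)
    refine hbdd.congr (.of_forall fun p => ?_)
    rcases eq_or_ne p.2 0 with h | h
    · simp [h]
    · field_simp
  simp_rw [EuclideanSpace.real_norm_sq_eq, Finset.sum_mul]
  rw [integral_finsetSum _ fun j _ => hcoord j]
  rw [Finset.sum_congr rfl fun j _ => integral_coord_sq_mul_radial F j i]
  simp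

end Radial

noncomputable def diamondProfile (T m t r : ℝ) : ℝ :=
  (Iic (min (T / 2 - t) (T / 2 + t))).indicator (fun r => √((T / 2 - t) ^ 2 - r ^ 2) ^ m) r

section Diamond

variable {n : ℕ} {T m : ℝ}

lemma mem_diamond_iff {x : MinkPt n} :
    x ∈ diamond n T ↔ ‖x.2‖ ≤ min (T / 2 - x.1) (T / 2 + x.1) := by
  simp only [diamond, causalLE, pDiam, qDiam, mem_ofPred_eq, le_min_iff]
  rw [zero_sub, norm_neg, sub_zero, sub_neg_eq_add, add_comm]
  exact and_comm

lemma tau_qDiam (x : MinkPt n) : tau x (qDiam n T) = √((T / 2 - x.1) ^ 2 - ‖x.2‖ ^ 2) := by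
  simp [tau, qDiam]

lemma isCompact_diamond : IsCompact (diamond n T) := by
  have hclosed : IsClosed (diamond n T) := by
    simp only [diamond, causalLE, ofPred_and]
    exact (isClosed_le (by fun_prop) (by fun_prop)).inter (isClosed_le (by fun_prop) (by fun_prop))
  refine (isCompact_closedBall (0 : MinkPt n) (T / 2)).of_isClosed_subset hclosed fun x hx => ?_
  rw [mem_diamond_iff, le_min_iff] at hx
  rw [mem_closedBall_zero_iff, Prod.norm_def, Real.norm_eq_abs, max_le_iff, abs_le]
  refine ⟨⟨?_, ?_⟩, ?_⟩ <;> linarith [norm_nonneg x.2]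

lemma indicator_diamond_tau_rpow (x : MinkPt n) :
    (diamond n T).indicator (fun x => tau x (qDiam n T) ^ m) x =
      diamondProfile T m x.1 ‖x.2‖ := by
  simp only [diamondProfile, indicator, mem_Iic, mem_diamond_iff, tau_qDiam]

lemma indicator_diamond_mul_tau_rpow (f : MinkPt n → ℝ) :
    (diamond n T).indicator (fun x => f x * tau x (qDiam n T) ^ m) =
      fun x => f x * diamondProfile T m x.1 ‖x.2‖ := by
  ext x
  rw [indicator_mul_right, indicator_diamond_tau_rpow]

lemma setIntegral_diamond_mul_tau_rpow (f : MinkPt n → ℝ) :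
    ∫ x in diamond n T, f x * tau x (qDiam n T) ^ m =
      ∫ x, f x * diamondProfile T m x.1 ‖x.2‖ := by
  rw [← integral_indicator isCompact_diamond.isClosed.measurableSet,
    indicator_diamond_mul_tau_rpow]

lemma integrable_norm_pow_mul_diamondProfile (hm : 0 ≤ m) (k : ℕ) :
    Integrable fun x : MinkPt n => ‖x.2‖ ^ k * diamondProfile T m x.1 ‖x.2‖ := by
  rw [← indicator_diamond_mul_tau_rpow,
    integrable_indicator_iff isCompact_diamond.isClosed.measurableSet]
  have : Continuous fun x : ℝ => x ^ m := continuous_rpow_const hm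
  exact ContinuousOn.integrableOn_compact isCompact_diamond (by unfold tau; fun_prop)

lemma integral_norm_pow_mul_diamondProfile (hn : 2 ≤ n) (hm : 0 ≤ m) (k : ℕ) :
    ∫ x : MinkPt n, ‖x.2‖ ^ k * diamondProfile T m x.1 ‖x.2‖ =
      ((n - 1 : ℕ) * volume.real (ball (0 : EuclideanSpace ℝ (Fin (n - 1))) 1)) *
        triangleMoment T m (n - 2 + k) := by
  have : Nontrivial (EuclideanSpace ℝ (Fin (n - 1))) :=
    Module.nontrivial_of_finrank_pos (by rw [finrank_euclideanSpace_fin]; omega)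
  rw [Measure.volume_eq_prod,
    integral_prod_fun_norm _ (fun t r => r ^ k * diamondProfile T m t r)
      (integrable_norm_pow_mul_diamondProfile hm k), finrank_euclideanSpace_fin, triangleMoment,
    ← integral_sub_left_eq_self _ _ (T / 2)]
  congr 1
  refine integral_congr_ae (.of_forall fun s => ?_)
  have hprofile : diamondProfile T m (T / 2 - s) = (Iic (min s (T - s))).indicator
      fun r => √(s ^ 2 - r ^ 2) ^ m := by
    ext r
    simp only [diamondProfile, sub_sub_cancel, show T / 2 + (T / 2 - s) = T - s by ring]
  simp only [hprofile, ← mul_assoc, ← pow_add, Nat.sub_sub, one_add_one_eq_two]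
  simp only [← indicator_mul_right (Iic _) (fun r => r ^ (n - 2 + k))]
  rw [setIntegral_indicator measurableSet_Iic, Ioi_inter_Iic]

end Diamond

/-- For any spatial coordinate index `i ∈ {1,…,n-1}`,
`∫_{I[p,q]} (x^i)² τ(x,q)^m dx = f₂(m) · T² · ∫_{I[p,q]} τ(x,q)^m dx`, where
`f₂(m) = n(n+m)/(4(n+m+2)(n+m/2+1)(n+m/2))`; in particular the left-hand side is
independent of the choice of spatial index `i`. -/
theorem stmt4 (n : ℕ) (hn : 2 ≤ n) (T m : ℝ) (hT : 0 < T) (hm : 0 ≤ m) (i : Fin (n - 1)) :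
    (∫ x in diamond n T, (x.2 i) ^ 2 * tau x (qDiam n T) ^ m) =
      ((n : ℝ) * ((n : ℝ) + m) /
          (4 * ((n : ℝ) + m + 2) * ((n : ℝ) + m / 2 + 1) * ((n : ℝ) + m / 2))) *
        T ^ 2 * ∫ x in diamond n T, tau x (qDiam n T) ^ m := by
  obtain ⟨K, rfl⟩ := Nat.exists_eq_add_of_le' hn
  have hcoord := integral_norm_sq_mul_radial (diamondProfile T m) i
    (integrable_norm_pow_mul_diamondProfile hm 2)
  have hsq := integral_norm_pow_mul_diamondProfile (T := T) hn hm 2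
  have hone := integral_norm_pow_mul_diamondProfile (T := T) hn hm 0
  have hRHS := setIntegral_diamond_mul_tau_rpow (T := T) (m := m) (fun _ : MinkPt (K + 2) => 1)
  simp only [one_mul, pow_zero, Nat.add_sub_cancel, add_zero] at hRHS hone hsq
  rw [setIntegral_diamond_mul_tau_rpow, hRHS, hone]
  rw [hsq, triangleMoment_add_two hT.le hm] at hcoord
  rw [show ((K + 2 - 1 : ℕ) : ℝ) = K + 1 by norm_num] at hcoord ⊢
  apply mul_left_cancel₀ (show (K : ℝ) + 1 ≠ 0 by positivity)
  rw [← hcoord]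
  push_cast
  field_simp
  ring
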